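/- Let K be a positive semidefinite Hermitian operator on a finite-dimensional complex inner product space V, let P₀ be the orthogonal projection onto ker K, and let K⁺ be the Moore–Penrose pseudo-inverse of K (the operator that vanishes on ker K and inverts K on (ker K)ᗮ). Then for all u, v ∈ V: |⟨u, (1 − P₀)v⟩|² ≤ ⟨u, K⁺u⟩ · ⟨v, Kv⟩. -/

import Mathlib

/-- Functional calculus with respect to an orthonormal eigenbasis `b` with (real)
eigenvalues `μ`: the operator acting as multiplication by `h (μ i)` on the span of `b i`. -/
noncomputable def specFun {ι V : Type*} [Fintype ι] [NormedAddCommGroup V]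
    [InnerProductSpace ℂ V] (b : OrthonormalBasis ι ℂ V) (μ : ι → ℝ) (h : ℝ → ℂ) :
    V →L[ℂ] V :=
  ∑ i, h (μ i) • ((innerSL ℂ (b i)).smulRight (b i))

/-! In the eigenbasis, `⟪u, (1 - P₀) v⟫ = ∑ [μᵢ ≠ 0] ū_i v_i`, `⟪u, K⁺ u⟫ = ∑ μᵢ⁻¹ |u_i|²` and
`⟪v, K v⟫ = ∑ μᵢ |v_i|²`, so the inequality is the Cauchy–Schwarz inequality for the vectors
`(μᵢ^{-1/2} u_i)` and `(μᵢ^{1/2} v_i)`, both supported where `μᵢ ≠ 0`. -/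

/-- Since `0⁻¹ = 0`, the factor `μᵢ⁻¹ * μᵢ` is the indicator of `μᵢ ≠ 0`. -/
theorem norm_sum_inv_mul_self_mul_sq_le {ι 𝕜 : Type*} [RCLike 𝕜] (s : Finset ι) {μ : ι → ℝ}
    (hμ : ∀ i ∈ s, 0 ≤ μ i) (a c : ι → 𝕜) :
    ‖∑ i ∈ s, (((μ i)⁻¹ * μ i : ℝ) : 𝕜) * (a i * c i)‖ ^ 2
      ≤ (∑ i ∈ s, (μ i)⁻¹ * ‖a i‖ ^ 2) * ∑ i ∈ s, μ i * ‖c i‖ ^ 2 := by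
  have hnorm : ∀ i ∈ s,
      ‖(((μ i)⁻¹ * μ i : ℝ) : 𝕜) * (a i * c i)‖ = (μ i)⁻¹ * μ i * (‖a i‖ * ‖c i‖) :=
    fun i hi ↦ by
      rw [norm_mul, norm_mul, RCLike.norm_ofReal,
        abs_of_nonneg (mul_nonneg (inv_nonneg.2 (hμ i hi)) (hμ i hi))]
  calc ‖∑ i ∈ s, (((μ i)⁻¹ * μ i : ℝ) : 𝕜) * (a i * c i)‖ ^ 2
      ≤ (∑ i ∈ s, (μ i)⁻¹ * μ i * (‖a i‖ * ‖c i‖)) ^ 2 :=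
        pow_le_pow_left₀ (norm_nonneg _) ((norm_sum_le _ _).trans_eq (Finset.sum_congr rfl hnorm)) 2
    _ ≤ _ := by
        refine Finset.sum_sq_le_sum_mul_sum_of_sq_le_mul s
          (fun i hi ↦ mul_nonneg (inv_nonneg.2 (hμ i hi)) (sq_nonneg _))
          (fun i hi ↦ mul_nonneg (hμ i hi) (sq_nonneg _)) (fun i _ ↦ le_of_eq ?_)
        by_cases h : μ i = 0
        · simp [h]
        · field_simp

section specFun

variable {ι V : Type*} [Fintype ι] [NormedAddCommGroup V] [InnerProductSpace ℂ V]
  (b : OrthonormalBasis ι ℂ V) (μ : ι → ℝ)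

theorem inner_specFun_apply (h : ℝ → ℂ) (u v : V) :
    inner ℂ u (specFun b μ h v) = ∑ i, h (μ i) * (inner ℂ u (b i) * inner ℂ (b i) v) := by
  simp only [specFun, _root_.sum_apply, _root_.smul_apply,
    ContinuousLinearMap.smulRight_apply, innerSL_apply_apply, inner_sum, inner_smul_right]
  exact Finset.sum_congr rfl fun i _ ↦ by ring

theorem re_inner_specFun_apply_self (f : ℝ → ℝ) (u : V) :
    (inner ℂ u (specFun b μ (fun x ↦ (f x : ℂ)) u)).re = ∑ i, f (μ i) * ‖inner ℂ (b i) u‖ ^ 2 := by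
  rw [inner_specFun_apply, Complex.re_sum]
  refine Finset.sum_congr rfl fun i _ ↦ ?_
  rw [← inner_conj_symm u (b i), Complex.conj_mul', ← Complex.ofReal_pow, ← Complex.ofReal_mul,
    Complex.ofReal_re]

theorem specFun_apply_basis (h : ℝ → ℂ) (j : ι) : specFun b μ h (b j) = h (μ j) • b j := by
  classical
  simp [specFun, b.inner_eq_ite]

theorem eq_specFun_of_apply_basis {K : V →L[ℂ] V} {h : ℝ → ℂ}
    (hK : ∀ i, K (b i) = h (μ i) • b i) : K = specFun b μ h :=
  ContinuousLinearMap.coe_injective <| b.toBasis.ext fun i ↦ by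
    simp [hK, specFun_apply_basis]

end specFun

theorem offdiagonal_cauchy_schwarz_pseudoinverse_general
    {V : Type*} [NormedAddCommGroup V] [InnerProductSpace ℂ V]
    {ι : Type*} [Fintype ι]
    (b : OrthonormalBasis ι ℂ V) (μ : ι → ℝ)
    (K : V →L[ℂ] V) (hK : ∀ i, K (b i) = (μ i : ℂ) • b i) (hμ : ∀ i, 0 ≤ μ i)
    (u v : V) :
    ‖(inner ℂ u (v - specFun b μ (fun x => if x = 0 then (1 : ℂ) else 0) v) : ℂ)‖ ^ 2
      ≤ ((inner ℂ u (specFun b μ (fun x => ((x⁻¹ : ℝ) : ℂ)) u) : ℂ)).re *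
        ((inner ℂ v (K v) : ℂ)).re := by
  have hP₀ : inner ℂ u (v - specFun b μ (fun x => if x = 0 then (1 : ℂ) else 0) v)
      = ∑ i, (((μ i)⁻¹ * μ i : ℝ) : ℂ) * (inner ℂ u (b i) * inner ℂ (b i) v) := by
    rw [inner_sub_right, inner_specFun_apply, ← b.sum_inner_mul_inner u v,
      ← Finset.sum_sub_distrib]
    refine Finset.sum_congr rfl fun i _ ↦ ?_
    by_cases h : μ i = 0 <;> simp [h]
  have hKv : (inner ℂ v (K v)).re = ∑ i, μ i * ‖inner ℂ (b i) v‖ ^ 2 := by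
    rw [eq_specFun_of_apply_basis b μ hK]
    exact re_inner_specFun_apply_self b μ id v
  have hKu : (inner ℂ u (specFun b μ (fun x => ((x⁻¹ : ℝ) : ℂ)) u)).re
      = ∑ i, (μ i)⁻¹ * ‖inner ℂ (b i) u‖ ^ 2 :=
    re_inner_specFun_apply_self b μ (·⁻¹) u
  rw [hP₀, hKu, hKv]
  simp_rw [← norm_inner_symm u]
  exact norm_sum_inv_mul_self_mul_sq_le (𝕜 := ℂ) Finset.univ (fun i _ ↦ hμ i)
      (fun i ↦ inner ℂ u (b i)) (fun i ↦ inner ℂ (b i) v)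

/-- For positive semidefinite Hermitian `K` (orthonormal eigenbasis `b`,
nonnegative eigenvalues `μ`), with `P₀` the orthogonal projection onto `ker K`
(functional calculus of the indicator of `{0}`) and `K⁺` the Moore–Penrose pseudo-inverse
(functional calculus of `λ ↦ λ⁻¹`, with `0⁻¹ = 0`), one has
`|⟨u, (1 − P₀)v⟩|² ≤ ⟨u, K⁺u⟩ ⟨v, Kv⟩` for all `u, v`. -/
theorem offdiagonal_cauchy_schwarz_pseudoinverse
    {V : Type*} [NormedAddCommGroup V] [InnerProductSpace ℂ V] [FiniteDimensional ℂ V]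
    {ι : Type*} [Fintype ι]
    (b : OrthonormalBasis ι ℂ V) (μ : ι → ℝ)
    (K : V →L[ℂ] V) (hK : ∀ i, K (b i) = (μ i : ℂ) • b i) (hμ : ∀ i, 0 ≤ μ i)
    (u v : V) :
    ‖(inner ℂ u (v - specFun b μ (fun x => if x = 0 then (1 : ℂ) else 0) v) : ℂ)‖ ^ 2
      ≤ ((inner ℂ u (specFun b μ (fun x => ((x⁻¹ : ℝ) : ℂ)) u) : ℂ)).re *
        ((inner ℂ v (K v) : ℂ)).re :=
  offdiagonal_cauchy_schwarz_pseudoinverse_general b μ K hK hμ u v
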